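/- Let (E, sim, ser, inl) be a g-comtrace alphabet. For every step sequence v there exists a maximally concurrent step sequence u with u ≡ v. -/

import Mathlib

variable {E : Type*}

/-- A step over a comtrace alphabet `(E, sim, ser)`: a nonempty finite set of events,
pairwise related by `sim`. -/
def IsStep [DecidableEq E] (sim : E → E → Prop) (A : Finset E) : Prop :=
  A.Nonempty ∧ ∀ a ∈ A, ∀ b ∈ A, a ≠ b → sim a b

/-- A step sequence: a finite list of steps. -/
def IsStepSeq [DecidableEq E] (sim : E → E → Prop) (u : List (Finset E)) : Prop :=
  ∀ A ∈ u, IsStep sim A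

/-- The generating relation of comtrace congruence:
`w·A·z ≈ w·B·C·z` whenever `A`, `B`, `C` are steps with `B ∪ C = A` and `B × C ⊆ ser`. -/
def CTBase [DecidableEq E] (sim ser : E → E → Prop) (u v : List (Finset E)) : Prop :=
  ∃ (w z : List (Finset E)) (A B C : Finset E),
    IsStepSeq sim w ∧ IsStepSeq sim z ∧
    IsStep sim A ∧ IsStep sim B ∧ IsStep sim C ∧
    B ∪ C = A ∧ (∀ b ∈ B, ∀ c ∈ C, ser b c) ∧
    u = w ++ A :: z ∧ v = w ++ B :: C :: z

/-- The least equivalence relation containing `base`. -/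
def LeastEquiv {α : Type*} (base : α → α → Prop) (x y : α) : Prop :=
  ∀ c : α → α → Prop, Equivalence c → (∀ a b, base a b → c a b) → c x y

/-- Comtrace congruence: the least equivalence relation containing `CTBase`. -/
def CTEquiv [DecidableEq E] (sim ser : E → E → Prop) :
    List (Finset E) → List (Finset E) → Prop :=
  LeastEquiv (CTBase sim ser)

/-- The generating relation of g-comtrace congruence: the comtrace rule together with
the interleaving swap `w·A·B·z ≈ w·B·A·z` whenever `A × B ⊆ inl`. -/
def GCTBase [DecidableEq E] (sim ser inl : E → E → Prop)
    (u v : List (Finset E)) : Prop :=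
  CTBase sim ser u v ∨
  ∃ (w z : List (Finset E)) (A B : Finset E),
    IsStepSeq sim w ∧ IsStepSeq sim z ∧ IsStep sim A ∧ IsStep sim B ∧
    (∀ a ∈ A, ∀ b ∈ B, inl a b) ∧
    u = w ++ A :: B :: z ∧ v = w ++ B :: A :: z

/-- g-Comtrace congruence: the least equivalence relation containing `GCTBase`. -/
def GCTEquiv [DecidableEq E] (sim ser inl : E → E → Prop) :
    List (Finset E) → List (Finset E) → Prop :=
  LeastEquiv (GCTBase sim ser inl)

/-- `X_j` is maximally concurrent in `x` (0-indexed): every step sequence `B·y`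
g-congruent to the suffix `x.drop j` satisfies `|B| ≤ |X_j|`. -/
def MaxConcAt [DecidableEq E] (sim ser inl : E → E → Prop) (x : List (Finset E))
    (j : ℕ) : Prop :=
  ∃ h : j < x.length, ∀ (B : Finset E) (y : List (Finset E)),
    IsStep sim B → IsStepSeq sim y → GCTEquiv sim ser inl (B :: y) (x.drop j) →
    B.card ≤ (x.get ⟨j, h⟩).card

/-- `mcIdx x` is the smallest index `j` such that the `j`-th step is maximally
concurrent in `x`. -/
noncomputable def mcIdx [DecidableEq E] (sim ser inl : E → E → Prop)
    (x : List (Finset E)) : ℕ :=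
  sInf {j | MaxConcAt sim ser inl x j}

/-- A step sequence `u` is maximally concurrent iff (1) it has minimal length in its
congruence class, and (2) each suffix of `u` has minimal `mcIdx` among congruent step
sequences of the same length. -/
def MaximallyConcurrent [DecidableEq E] (sim ser inl : E → E → Prop)
    (u : List (Finset E)) : Prop :=
  (∀ v, IsStepSeq sim v → GCTEquiv sim ser inl u v → u.length ≤ v.length) ∧
  (∀ i < u.length, ∀ w, IsStepSeq sim w → GCTEquiv sim ser inl (u.drop i) w →
    (u.drop i).length = w.length →
    mcIdx sim ser inl (u.drop i) ≤ mcIdx sim ser inl w)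

/-!
Congruence preserves the total number of events, because splitting a step along the
irreflexive relation `ser` is a disjoint union. Hence the last step of a nonempty sequence is
always maximally concurrent, and `mcIdx (A :: y)` is either `0` or `mcIdx y + 1`, where
whether it is `0` depends only on the class of `y`.

Start from a representative of minimal length and build the answer from the front: pick an
`mcIdx`-minimal representative `A :: y` of the same length, recursively replace `y` by an
equal-length representative all of whose suffixes are `mcIdx`-minimal, and note that the
replacement cannot increase `mcIdx (A :: y)`.
-/

namespace LeastEquiv

variable {α β : Type*} {base : α → α → Prop} {x y : α}

theorem equivalence (base : α → α → Prop) : Equivalence (LeastEquiv base) :=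
  ⟨fun x _ hc _ => hc.refl x, fun h c hc hb => hc.symm (h c hc hb),
    fun h₁ h₂ c hc hb => hc.trans (h₁ c hc hb) (h₂ c hc hb)⟩

theorem of_base (h : base x y) : LeastEquiv base x y := fun _ _ hb => hb _ _ h

theorem map {base' : β → β → Prop} (f : α → β)
    (hf : ∀ a b, base a b → base' (f a) (f b)) (h : LeastEquiv base x y) :
    LeastEquiv base' (f x) (f y) :=
  h (fun a b => LeastEquiv base' (f a) (f b))
    ⟨fun _ => (equivalence _).refl _, (equivalence _).symm, (equivalence _).trans⟩
    fun a b hab => of_base (hf a b hab)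

theorem eq_of_base (g : α → β) (hg : ∀ a b, base a b → g a = g b)
    (h : LeastEquiv base x y) : g x = g y :=
  h (fun a b => g a = g b) ⟨fun _ => rfl, Eq.symm, Eq.trans⟩ hg

end LeastEquiv

section GCongruence

variable [DecidableEq E] {sim ser inl : E → E → Prop}

theorem GCTEquiv.equivalence : Equivalence (GCTEquiv sim ser inl) :=
  LeastEquiv.equivalence _

theorem IsStepSeq.cons {A : Finset E} {w : List (Finset E)} (hA : IsStep sim A)
    (hw : IsStepSeq sim w) : IsStepSeq sim (A :: w) := by
  simpa [IsStepSeq] using ⟨hA, hw⟩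

theorem GCTBase.cons {A : Finset E} {u w : List (Finset E)} (hA : IsStep sim A)
    (h : GCTBase sim ser inl u w) : GCTBase sim ser inl (A :: u) (A :: w) := by
  rcases h with ⟨w₀, z, A', B, C, hw₀, hz, hA', hB, hC, hBC, hser, rfl, rfl⟩ |
    ⟨w₀, z, A', B', hw₀, hz, hA', hB', hinl, rfl, rfl⟩
  · exact .inl ⟨A :: w₀, z, A', B, C, hw₀.cons hA, hz, hA', hB, hC, hBC, hser, rfl, rfl⟩
  · exact .inr ⟨A :: w₀, z, A', B', hw₀.cons hA, hz, hA', hB', hinl, rfl, rfl⟩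

theorem GCTEquiv.cons {A : Finset E} {y y' : List (Finset E)} (hA : IsStep sim A)
    (h : GCTEquiv sim ser inl y y') : GCTEquiv sim ser inl (A :: y) (A :: y') :=
  LeastEquiv.map (A :: ·) (fun _ _ => GCTBase.cons hA) h

theorem GCTBase.sum_card_eq (hser : ∀ a, ¬ ser a a) {x y : List (Finset E)}
    (h : GCTBase sim ser inl x y) : (x.map Finset.card).sum = (y.map Finset.card).sum := by
  rcases h with ⟨w, z, A, B, C, -, -, -, -, -, rfl, hBC, rfl, rfl⟩ |
    ⟨w, z, A, B, -, -, -, -, -, rfl, rfl⟩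
  · have hdisj : Disjoint B C :=
      Finset.disjoint_left.2 fun a haB haC => hser a (hBC a haB a haC)
    simp only [List.map_append, List.sum_append, List.map_cons, List.sum_cons,
      Finset.card_union_of_disjoint hdisj]
    omega
  · simp only [List.map_append, List.sum_append, List.map_cons, List.sum_cons]
    omega

theorem GCTEquiv.sum_card_eq (hser : ∀ a, ¬ ser a a) {x y : List (Finset E)}
    (h : GCTEquiv sim ser inl x y) : (x.map Finset.card).sum = (y.map Finset.card).sum :=
  LeastEquiv.eq_of_base (fun l => (l.map Finset.card).sum)
    (fun _ _ => GCTBase.sum_card_eq hser) h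

end GCongruence

section MaxConc

variable [DecidableEq E] {sim ser inl : E → E → Prop} {A : Finset E} {x y y' : List (Finset E)}

theorem maxConcAt_cons_succ {k : ℕ} :
    MaxConcAt sim ser inl (A :: y) (k + 1) ↔ MaxConcAt sim ser inl y k := by
  simp [MaxConcAt]

theorem MaxConcAt.cons_zero_of_equiv (hA : IsStep sim A) (he : GCTEquiv sim ser inl y' y)
    (h : MaxConcAt sim ser inl (A :: y) 0) : MaxConcAt sim ser inl (A :: y') 0 := by
  obtain ⟨_, hmax⟩ := h
  exact ⟨by simp, fun B z hB hz hBz =>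
    hmax B z hB hz (GCTEquiv.equivalence.trans hBz (GCTEquiv.cons hA he))⟩

theorem maxConcAt_length_sub_one (hser : ∀ a, ¬ ser a a) (hx : x ≠ []) :
    MaxConcAt sim ser inl x (x.length - 1) := by
  have hlt : x.length - 1 < x.length := Nat.sub_one_lt (List.length_pos_iff.2 hx).ne'
  refine ⟨hlt, fun B z _ _ hBz => ?_⟩
  have hsum := hBz.sum_card_eq hser
  rw [List.drop_length_sub_one hx] at hsum
  simp only [List.map_cons, List.sum_cons, List.map_nil, List.sum_nil] at hsum
  simp only [List.get_eq_getElem, List.getLast_eq_getElem] at hsum ⊢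
  omega

theorem mcIdx_eq_zero (h : MaxConcAt sim ser inl x 0) : mcIdx sim ser inl x = 0 :=
  Nat.eq_zero_of_le_zero (Nat.sInf_le h)

theorem mcIdx_cons_of_not_maxConcAt_zero (hser : ∀ a, ¬ ser a a)
    (h0 : ¬ MaxConcAt sim ser inl (A :: y) 0) :
    mcIdx sim ser inl (A :: y) = mcIdx sim ser inl y + 1 := by
  have hy : y ≠ [] := by
    rintro rfl
    exact h0 (maxConcAt_length_sub_one hser (by simp))
  have hmem : MaxConcAt sim ser inl y (mcIdx sim ser inl y) :=
    Nat.sInf_mem (s := {j | MaxConcAt sim ser inl y j}) ⟨_, maxConcAt_length_sub_one hser hy⟩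
  refine le_antisymm (Nat.sInf_le (maxConcAt_cons_succ.2 hmem))
    (le_csInf ⟨_, maxConcAt_cons_succ.2 hmem⟩ fun j hj => ?_)
  obtain _ | k := j
  · exact absurd hj h0
  · exact Nat.succ_le_succ (Nat.sInf_le (maxConcAt_cons_succ.1 hj))

theorem mcIdx_cons_le_cons (hser : ∀ a, ¬ ser a a) (hA : IsStep sim A)
    (he : GCTEquiv sim ser inl y' y) (hle : mcIdx sim ser inl y' ≤ mcIdx sim ser inl y) :
    mcIdx sim ser inl (A :: y') ≤ mcIdx sim ser inl (A :: y) := by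
  by_cases h0 : MaxConcAt sim ser inl (A :: y') 0
  · simp [mcIdx_eq_zero h0]
  · have h0' : ¬ MaxConcAt sim ser inl (A :: y) 0 := fun h => h0 (h.cons_zero_of_equiv hA he)
    rw [mcIdx_cons_of_not_maxConcAt_zero hser h0, mcIdx_cons_of_not_maxConcAt_zero hser h0']
    omega

end MaxConc

def IsMcIdxMinimal [DecidableEq E] (sim ser inl : E → E → Prop) (u : List (Finset E)) : Prop :=
  ∀ w, IsStepSeq sim w → GCTEquiv sim ser inl u w → u.length = w.length →
    mcIdx sim ser inl u ≤ mcIdx sim ser inl w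

section McIdxMinimal

variable [DecidableEq E] {sim ser inl : E → E → Prop}

theorem exists_isMcIdxMinimal_equiv {x : List (Finset E)} (hx : IsStepSeq sim x) :
    ∃ w, IsStepSeq sim w ∧ GCTEquiv sim ser inl w x ∧ w.length = x.length ∧
      IsMcIdxMinimal sim ser inl w := by
  obtain ⟨w, ⟨hw, hwx, hlen⟩, hmin⟩ := (measure (mcIdx sim ser inl)).wf.has_min
    {w | IsStepSeq sim w ∧ GCTEquiv sim ser inl w x ∧ w.length = x.length}
    ⟨x, hx, GCTEquiv.equivalence.refl x, rfl⟩
  refine ⟨w, hw, hwx, hlen, fun w' hw' hww' hlen' => not_lt.1 ?_⟩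
  exact hmin w' ⟨hw', GCTEquiv.equivalence.trans (GCTEquiv.equivalence.symm hww') hwx,
    hlen' ▸ hlen⟩

theorem IsMcIdxMinimal.cons_of_equiv (hser : ∀ a, ¬ ser a a) {A : Finset E}
    {y y' : List (Finset E)} (hmin : IsMcIdxMinimal sim ser inl (A :: y)) (hA : IsStep sim A)
    (he : GCTEquiv sim ser inl y' y) (hlen : y'.length = y.length)
    (hle : mcIdx sim ser inl y' ≤ mcIdx sim ser inl y) :
    IsMcIdxMinimal sim ser inl (A :: y') := fun w hw hw' hlen' =>
  (mcIdx_cons_le_cons hser hA he hle).trans <| hmin w hw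
    (GCTEquiv.equivalence.trans (GCTEquiv.cons hA (GCTEquiv.equivalence.symm he)) hw')
    (by simpa [hlen] using hlen')

theorem exists_equiv_forall_drop_isMcIdxMinimal (hser : ∀ a, ¬ ser a a)
    {x : List (Finset E)} (hx : IsStepSeq sim x) :
    ∃ u, IsStepSeq sim u ∧ GCTEquiv sim ser inl u x ∧ u.length = x.length ∧
      ∀ i, IsMcIdxMinimal sim ser inl (u.drop i) := by
  induction hn : x.length generalizing x with
  | zero =>
    obtain rfl : x = [] := List.eq_nil_of_length_eq_zero hn
    refine ⟨[], hx, GCTEquiv.equivalence.refl _, rfl, fun i w _ _ hlen => ?_⟩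
    simp [List.eq_nil_of_length_eq_zero (by simpa using hlen.symm : w.length = 0)]
  | succ n ih =>
    obtain ⟨_ | ⟨A, y⟩, hw, hwx, hlen, hmin⟩ :=
      exists_isMcIdxMinimal_equiv (ser := ser) (inl := inl) hx
    · simp [hn] at hlen
    have hA : IsStep sim A := hw A List.mem_cons_self
    have hy : IsStepSeq sim y := fun X hX => hw X (List.mem_cons_of_mem _ hX)
    have hyn : y.length = n := by simpa [hn] using hlen
    obtain ⟨y', hy', hy'y, hy'n, hmin'⟩ := ih hy hyn
    have hy'len : y'.length = y.length := hy'n.trans hyn.symm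
    refine ⟨A :: y', hy'.cons hA, GCTEquiv.equivalence.trans (GCTEquiv.cons hA hy'y) hwx,
      by simp [hy'n], fun i => ?_⟩
    obtain _ | k := i
    · exact hmin.cons_of_equiv hser hA hy'y hy'len (hmin' 0 y hy hy'y hy'len)
    · exact hmin' k

end McIdxMinimal

theorem stmt12_general [DecidableEq E] (sim ser inl : E → E → Prop)
    (hsim_irr : ∀ a, ¬ sim a a)
    (hser_sub : ∀ a b, ser a b → sim a b)
    (v : List (Finset E)) (hv : IsStepSeq sim v) :
    ∃ u : List (Finset E),
      IsStepSeq sim u ∧ MaximallyConcurrent sim ser inl u ∧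
        GCTEquiv sim ser inl u v := by
  have hser : ∀ a, ¬ ser a a := fun a h => hsim_irr a (hser_sub a a h)
  obtain ⟨x, ⟨hx, hxv⟩, hshortest⟩ := (measure List.length).wf.has_min
    {x | IsStepSeq sim x ∧ GCTEquiv sim ser inl x v} ⟨v, hv, GCTEquiv.equivalence.refl v⟩
  obtain ⟨u, hu, hux, hlen, hmin⟩ :=
    exists_equiv_forall_drop_isMcIdxMinimal (inl := inl) hser hx
  have huv : GCTEquiv sim ser inl u v := GCTEquiv.equivalence.trans hux hxv
  refine ⟨u, hu, ⟨fun w hw huw => ?_, fun i _ => hmin i⟩, huv⟩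
  exact hlen ▸ not_lt.1
    (hshortest w ⟨hw, GCTEquiv.equivalence.trans (GCTEquiv.equivalence.symm huw) huv⟩)

/-- Every step sequence over a g-comtrace alphabet is congruent to a maximally
concurrent step sequence. -/
theorem stmt12 [DecidableEq E] [Fintype E] (sim ser inl : E → E → Prop)
    (hsim_irr : ∀ a, ¬ sim a a) (hsim_symm : ∀ a b, sim a b → sim b a)
    (hinl_irr : ∀ a, ¬ inl a a) (hinl_symm : ∀ a b, inl a b → inl b a)
    (hser_sub : ∀ a b, ser a b → sim a b)
    (hdisj : ∀ a b, ¬ (sim a b ∧ inl a b))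
    (v : List (Finset E)) (hv : IsStepSeq sim v) :
    ∃ u : List (Finset E),
      IsStepSeq sim u ∧ MaximallyConcurrent sim ser inl u ∧
        GCTEquiv sim ser inl u v :=
  stmt12_general sim ser inl hsim_irr hser_sub v hv
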